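/- Let w_1,…,w_n ∈ ℝ^d be unit vectors, J ⊆ [n], and define τ₁(v) = max_{j∈J} w_jᵀv, τ₂(v) = max_{j∉J} w_jᵀv, δ = τ₁(v) − τ₂(v) for v ∈ cv{w_j : j∈J}. Then for x = v + εr with ‖r‖ = 1 and ε > 0, the continuous Hopfield map f(x) = W·S_β(Wᵀx) satisfies Dist(f(x), cv{w_j : j∈J}) < 2(n − |J|)·exp(β(−δ + 2ε)). -/

import Mathlib

/-!
Write `s = S_β(Wᵀx)`. The point `f(x) = ∑ⱼ sⱼ wⱼ` is within `2 ∑_{j ∉ J} sⱼ` of the normalised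
`J`-part `y = (∑_{j ∈ J} sⱼ)⁻¹ ∑_{j ∈ J} sⱼ wⱼ ∈ cv{wⱼ : j ∈ J}`, because
`f(x) - y = ∑_{j ∉ J} sⱼ wⱼ - (∑_{j ∉ J} sⱼ) y` and all vectors involved have norm at most one.
Each weight `sⱼ` with `j ∉ J` is smaller than `exp (β (⟪wⱼ, x⟫ - ⟪wₖ, x⟫))` for a maximiser `k ∈ J`
of `⟪wₖ, v⟫`, and moving from `v` to `x = v + εr` changes that gap by at most `2ε`.
-/

open Real Finset
open scoped RealInnerProductSpace

noncomputable def softmax (n : ℕ) (β : ℝ) (x : Fin n → ℝ) : Fin n → ℝ :=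
  fun j => Real.exp (β * x j) / ∑ i, Real.exp (β * x i)

/-- The continuous Hopfield map f(x) = W S_β(Wᵀ x). -/
noncomputable def hopfield (d n : ℕ) (β : ℝ) (w : Fin n → EuclideanSpace ℝ (Fin d))
    (x : EuclideanSpace ℝ (Fin d)) : EuclideanSpace ℝ (Fin d) :=
  ∑ j, softmax n β (fun i => ⟪w i, x⟫) j • w j

section ConvexHull

variable {ι E : Type*} [NormedAddCommGroup E] [NormedSpace ℝ E]

theorem norm_sum_smul_le_sum {t : Finset ι} {s : ι → ℝ} {w : ι → E} (hs : ∀ j ∈ t, 0 ≤ s j)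
    (hw : ∀ j ∈ t, ‖w j‖ ≤ 1) : ‖∑ j ∈ t, s j • w j‖ ≤ ∑ j ∈ t, s j :=
  calc ‖∑ j ∈ t, s j • w j‖ ≤ ∑ j ∈ t, ‖s j • w j‖ := norm_sum_le _ _
    _ ≤ ∑ j ∈ t, s j := sum_le_sum fun j hj => by
      rw [norm_smul, Real.norm_of_nonneg (hs j hj)]
      exact mul_le_of_le_one_right (hs j hj) (hw j hj)

theorem norm_centerMass_le_one {t : Finset ι} {s : ι → ℝ} {w : ι → E} (hs : ∀ j ∈ t, 0 ≤ s j)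
    (ht : 0 < ∑ j ∈ t, s j) (hw : ∀ j ∈ t, ‖w j‖ ≤ 1) : ‖t.centerMass s w‖ ≤ 1 := by
  have hsub : convexHull ℝ (w '' t) ⊆ Metric.closedBall 0 1 :=
    convexHull_min (by rintro _ ⟨j, hj, rfl⟩; simpa using hw j hj) (convex_closedBall 0 1)
  simpa using hsub (t.centerMass_mem_convexHull hs ht fun j hj => Set.mem_image_of_mem w hj)

theorem infDist_sum_smul_convexHull_le [Fintype ι] [DecidableEq ι] {s : ι → ℝ} {w : ι → E}
    (hs : ∀ j, 0 ≤ s j) (hs₁ : ∑ j, s j = 1) (hw : ∀ j, ‖w j‖ ≤ 1) (J : Finset ι)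
    (hJ : 0 < ∑ j ∈ J, s j) :
    Metric.infDist (∑ j, s j • w j) (convexHull ℝ (w '' J)) ≤ 2 * ∑ j ∈ Jᶜ, s j := by
  set y := J.centerMass s w
  have hy : y ∈ convexHull ℝ (w '' J) :=
    J.centerMass_mem_convexHull (fun j _ => hs j) hJ fun j hj => Set.mem_image_of_mem w hj
  have hsplit : ∑ j, s j • w j - y = ∑ j ∈ Jᶜ, s j • w j - (∑ j ∈ Jᶜ, s j) • y := by
    have hJy : ∑ j ∈ J, s j • w j = (∑ j ∈ J, s j) • y := (smul_inv_smul₀ hJ.ne' _).symm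
    have hcompl : ∑ j ∈ Jᶜ, s j = 1 - ∑ j ∈ J, s j := by
      rw [← hs₁, ← sum_add_sum_compl J s]; ring
    rw [← sum_add_sum_compl J, hJy, hcompl, sub_smul, one_smul]
    abel
  calc Metric.infDist (∑ j, s j • w j) (convexHull ℝ (w '' J))
      ≤ ‖∑ j, s j • w j - y‖ := (Metric.infDist_le_dist_of_mem hy).trans_eq (dist_eq_norm _ _)
    _ ≤ ‖∑ j ∈ Jᶜ, s j • w j‖ + (∑ j ∈ Jᶜ, s j) * ‖y‖ := by
      rw [hsplit]
      refine (norm_sub_le _ _).trans_eq ?_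
      rw [norm_smul, Real.norm_of_nonneg (sum_nonneg fun j _ => hs j)]
    _ ≤ ∑ j ∈ Jᶜ, s j + (∑ j ∈ Jᶜ, s j) * 1 := by
      gcongr
      · exact norm_sum_smul_le_sum (fun j _ => hs j) fun j _ => hw j
      · exact sum_nonneg fun j _ => hs j
      · exact norm_centerMass_le_one (fun j _ => hs j) hJ fun j _ => hw j
    _ = 2 * ∑ j ∈ Jᶜ, s j := by ring

end ConvexHull

section Softmax

variable {n : ℕ} (β : ℝ) (x : Fin n → ℝ)

theorem softmax_pos [NeZero n] (j : Fin n) : 0 < softmax n β x j :=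
  div_pos (exp_pos _) (sum_pos (fun _ _ => exp_pos _) univ_nonempty)

theorem sum_softmax [NeZero n] : ∑ j, softmax n β x j = 1 := by
  simp only [softmax, ← sum_div]
  exact div_self (sum_pos (fun _ _ => exp_pos _) univ_nonempty).ne'

theorem softmax_lt_exp_sub {j k : Fin n} (hjk : j ≠ k) :
    softmax n β x j < exp (β * (x j - x k)) := by
  have hk : exp (β * x k) < ∑ i, exp (β * x i) :=
    single_lt_sum (f := fun i => exp (β * x i)) hjk (mem_univ k) (mem_univ j) (exp_pos _)
      fun i _ _ => (exp_pos _).le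
  rw [mul_sub, exp_sub]
  exact div_lt_div_of_pos_left (exp_pos _) (exp_pos _) hk

end Softmax

section Perturbation

variable {E : Type*} [NormedAddCommGroup E] [InnerProductSpace ℝ E]

theorem inner_sub_inner_add_smul_le {a b r : E} (ha : ‖a‖ ≤ 1) (hb : ‖b‖ ≤ 1) (hr : ‖r‖ ≤ 1)
    (v : E) {ε : ℝ} (hε : 0 ≤ ε) : ⟪a, v + ε • r⟫ - ⟪b, v + ε • r⟫ ≤ ⟪a, v⟫ - ⟪b, v⟫ + 2 * ε := by
  have hunit : ∀ c : E, ‖c‖ ≤ 1 → |⟪c, r⟫| ≤ 1 := fun c hc =>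
    (abs_real_inner_le_norm c r).trans (mul_le_one₀ hc (norm_nonneg r) hr)
  have har := abs_le.mp (hunit a ha)
  have hbr := abs_le.mp (hunit b hb)
  simp only [inner_add_right, real_inner_smul_right]
  nlinarith

theorem softmax_inner_add_smul_lt {n : ℕ} {β ε : ℝ} (hβ : 0 ≤ β) (hε : 0 ≤ ε) {w : Fin n → E}
    (hw : ∀ j, ‖w j‖ ≤ 1) (v : E) {r : E} (hr : ‖r‖ ≤ 1) {j k : Fin n} (hjk : j ≠ k) :
    softmax n β (fun i => ⟪w i, v + ε • r⟫) j < exp (β * (⟪w j, v⟫ - ⟪w k, v⟫ + 2 * ε)) :=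
  (softmax_lt_exp_sub β _ hjk).trans_le <| exp_le_exp.mpr <|
    mul_le_mul_of_nonneg_left (inner_sub_inner_add_smul_le (hw j) (hw k) hr v hε) hβ

end Perturbation

/-- Lemma 3 of the paper: for x = v + εr with v in the convex hull of the J-patterns,
the image f(x) is exponentially close to that convex hull. -/
theorem hopfield_dist_convexHull (d n : ℕ) (β : ℝ) (hβ : 0 < β)
    (w : Fin n → EuclideanSpace ℝ (Fin d)) (hw : ∀ j, ‖w j‖ = 1)
    (J : Finset (Fin n)) (hJ : J.Nonempty) (hJne : J ≠ Finset.univ)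
    (v : EuclideanSpace ℝ (Fin d))
    (r : EuclideanSpace ℝ (Fin d)) (hr : ‖r‖ = 1) (ε : ℝ) (hε : 0 < ε) :
    Metric.infDist (hopfield d n β w (v + ε • r)) (convexHull ℝ (w '' J)) <
      2 * (n - J.card) *
        Real.exp (β * (-((J.sup' hJ fun j => ⟪w j, v⟫) -
          (Jᶜ.sup' (by simpa [Finset.nonempty_iff_ne_empty, Finset.compl_eq_univ_sdiff]
              using fun h => hJne (by simpa [Finset.sdiff_eq_empty_iff_subset] using h))
            fun j => ⟪w j, v⟫)) + 2 * ε)) := by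
  have hJc : Jᶜ.Nonempty := nonempty_iff_ne_empty.mpr ((compl_eq_empty_iff J).not.mpr hJne)
  have : NeZero n := ⟨by rintro rfl; exact hJ.ne_empty (Subsingleton.elim _ _)⟩
  set s := softmax n β fun i => ⟪w i, v + ε • r⟫
  set ρ := exp (β * (-((J.sup' hJ fun j => ⟪w j, v⟫) - Jᶜ.sup' hJc fun j => ⟪w j, v⟫) + 2 * ε))
  obtain ⟨k, hkJ, hk⟩ := exists_mem_eq_sup' hJ fun j => ⟪w j, v⟫
  have hsρ : ∀ j ∈ Jᶜ, s j < ρ := fun j hj =>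
    (softmax_inner_add_smul_lt hβ.le hε.le (fun i => (hw i).le) v hr.le
      (ne_of_mem_of_not_mem hkJ (mem_compl.mp hj)).symm).trans_le <|
        exp_le_exp.mpr <| mul_le_mul_of_nonneg_left (by
          rw [hk]; linarith [le_sup' (fun j => ⟪w j, v⟫) hj]) hβ.le
  have hcard : ((Jᶜ).card : ℝ) = n - J.card := by
    rw [card_compl, Fintype.card_fin, Nat.cast_sub (by simpa using card_le_univ J)]
  calc Metric.infDist (hopfield d n β w (v + ε • r)) (convexHull ℝ (w '' J))
      ≤ 2 * ∑ j ∈ Jᶜ, s j :=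
        infDist_sum_smul_convexHull_le (fun j => (softmax_pos β _ j).le) (sum_softmax β _)
          (fun j => (hw j).le) J (sum_pos (fun j _ => softmax_pos β _ j) hJ)
    _ < 2 * ∑ _j ∈ Jᶜ, ρ := mul_lt_mul_of_pos_left (sum_lt_sum_of_nonempty hJc hsρ) two_pos
    _ = 2 * (n - J.card) * ρ := by rw [sum_const, nsmul_eq_mul, hcard, mul_assoc]
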